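/- arXiv:math/0605365 — 2 statements merged into one kernel-verified Lean document; each statement's English description precedes it below -/
import Mathlib

section
/- Negativity of the Lyapunov drift (key step of Lemma 2.1's application): Assume b satisfies (H-2) and the pair (b,a) satisfies (H-3) with constants K, L > 0. Fix c with 0 < c ≤ 1/K and set r(x) = (2 + ‖x‖)‖x‖/(1 + ‖x‖)². Then there exists L' > 0 such that for every x ∈ ℝ^d with ‖x‖ ≥ L', c (r(x)/‖x‖) ⟨x, b(x)⟩ + (c² r(x)²/(2‖x‖²)) ⟨x, a(x)x⟩ ≤ −(c/2) r(x) |⟨x, b(x)⟩| / ‖x‖, and in particular this quantity is ≤ 0. (The left-hand side equals 𝔇V(x) = ⟨∇V(x), b(x)⟩ + (1/2)⟨∇V(x), a(x)∇V(x)⟩ for V(x) = c‖x‖²/(1+‖x‖).) -/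
open scoped RealInnerProductSpace

lemma two_add_mul_div_one_add_sq_le_one (t : ℝ) : (2 + t) * t / (1 + t) ^ 2 ≤ 1 :=
  div_le_one_of_le₀ (by nlinarith) (sq_nonneg _)

/-- Since `A ≤ K t |P|`, the second-order term is at most `c r K / 2` times the size of the
(negative) first-order term. -/
lemma drift_le_half_first_order {c r t K P A : ℝ} (hc : 0 ≤ c) (hr : 0 ≤ r) (ht : 0 < t)
    (hcrK : c * r * K ≤ 1) (hP : P ≤ 0) (hA : A ≤ K * t * |P|) :
    c * r / t * P + c ^ 2 * r ^ 2 / (2 * t ^ 2) * A ≤ -(c / 2) * r * |P| / t := by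
  have hP_eq : P = -|P| := by rw [abs_of_nonpos hP, neg_neg]
  calc c * r / t * P + c ^ 2 * r ^ 2 / (2 * t ^ 2) * A
      ≤ c * r / t * P + c ^ 2 * r ^ 2 / (2 * t ^ 2) * (K * t * |P|) := by gcongr
    _ = -(c / 2) * r * |P| / t - c * r * |P| / (2 * t) * (1 - c * r * K) := by
        rw [hP_eq, abs_neg, abs_abs]; field_simp; ring
    _ ≤ -(c / 2) * r * |P| / t := sub_le_self _ (mul_nonneg (by positivity) (by linarith))

theorem lyapunov_drift_negativity_general {d : ℕ}
    (b : EuclideanSpace ℝ (Fin d) → EuclideanSpace ℝ (Fin d))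
    (a : EuclideanSpace ℝ (Fin d) →
      (EuclideanSpace ℝ (Fin d) →ₗ[ℝ] EuclideanSpace ℝ (Fin d)))
    (hH2 : ∀ R : ℝ, 0 < R → ∃ L₀ : ℝ, 0 < L₀ ∧ ∀ x, L₀ ≤ ‖x‖ → ⟪x, b x⟫ ≤ -R * ‖x‖)
    (K L : ℝ) (hK : 0 < K)
    (hH3 : ∀ x, L < ‖x‖ → ⟪x, a x x⟫ ≤ K * ‖x‖ * |⟪x, b x⟫|)
    (c : ℝ) (hc : 0 < c) (hcK : c ≤ 1 / K) :
    ∃ L' : ℝ, 0 < L' ∧ ∀ x : EuclideanSpace ℝ (Fin d), L' ≤ ‖x‖ →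
      (c * ((2 + ‖x‖) * ‖x‖ / (1 + ‖x‖) ^ 2) / ‖x‖) * ⟪x, b x⟫
          + c ^ 2 * ((2 + ‖x‖) * ‖x‖ / (1 + ‖x‖) ^ 2) ^ 2 / (2 * ‖x‖ ^ 2) * ⟪x, a x x⟫
        ≤ -(c / 2) * ((2 + ‖x‖) * ‖x‖ / (1 + ‖x‖) ^ 2) * |⟪x, b x⟫| / ‖x‖
      ∧ (c * ((2 + ‖x‖) * ‖x‖ / (1 + ‖x‖) ^ 2) / ‖x‖) * ⟪x, b x⟫
          + c ^ 2 * ((2 + ‖x‖) * ‖x‖ / (1 + ‖x‖) ^ 2) ^ 2 / (2 * ‖x‖ ^ 2) * ⟪x, a x x⟫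
        ≤ 0 := by
  obtain ⟨L₀, hL₀, hb⟩ := hH2 1 one_pos
  refine ⟨max (L + 1) L₀, hL₀.trans_le (le_max_right _ _), fun x hx => ?_⟩
  have hxL : L < ‖x‖ := (lt_add_one L).trans_le ((le_max_left _ _).trans hx)
  have hxL₀ : L₀ ≤ ‖x‖ := (le_max_right _ _).trans hx
  have hx : 0 < ‖x‖ := hL₀.trans_le hxL₀
  have hP : ⟪x, b x⟫ ≤ 0 := by linarith [hb x hxL₀]
  have hr : 0 ≤ (2 + ‖x‖) * ‖x‖ / (1 + ‖x‖) ^ 2 := by positivity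
  have hcrK : c * ((2 + ‖x‖) * ‖x‖ / (1 + ‖x‖) ^ 2) * K ≤ 1 := by
    have hcK' : c * K ≤ 1 := (le_div_iff₀ hK).mp hcK
    nlinarith [two_add_mul_div_one_add_sq_le_one ‖x‖]
  have key := drift_le_half_first_order hc.le hr hx hcrK hP (hH3 x hxL)
  refine ⟨key, key.trans ?_⟩
  rw [neg_mul, neg_mul, neg_div]
  exact neg_nonpos.mpr (by positivity)

/-- Negativity of the Lyapunov drift: under (H-2) and (H-3), with `0 < c ≤ 1/K` and
`r(x) = (2 + ‖x‖)‖x‖/(1 + ‖x‖)²`, there is `L' > 0` such that for `‖x‖ ≥ L'`,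
`c (r(x)/‖x‖)⟨x, b(x)⟩ + (c² r(x)²/(2‖x‖²))⟨x, a(x)x⟩ ≤ −(c/2) r(x)|⟨x, b(x)⟩|/‖x‖ ≤ 0`. -/
theorem lyapunov_drift_negativity {d : ℕ} (hd : 1 ≤ d)
    (b : EuclideanSpace ℝ (Fin d) → EuclideanSpace ℝ (Fin d))
    (a : EuclideanSpace ℝ (Fin d) →
      (EuclideanSpace ℝ (Fin d) →ₗ[ℝ] EuclideanSpace ℝ (Fin d)))
    (ha_symm : ∀ x u v, ⟪a x u, v⟫ = ⟪u, a x v⟫)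
    (ha_psd : ∀ x v, 0 ≤ ⟪v, a x v⟫)
    (hH2 : ∀ R : ℝ, 0 < R → ∃ L₀ : ℝ, 0 < L₀ ∧ ∀ x, L₀ ≤ ‖x‖ → ⟪x, b x⟫ ≤ -R * ‖x‖)
    (K L : ℝ) (hK : 0 < K) (hL : 0 < L)
    (hH3 : ∀ x, L < ‖x‖ → ⟪x, a x x⟫ ≤ K * ‖x‖ * |⟪x, b x⟫|)
    (c : ℝ) (hc : 0 < c) (hcK : c ≤ 1 / K) :
    ∃ L' : ℝ, 0 < L' ∧ ∀ x : EuclideanSpace ℝ (Fin d), L' ≤ ‖x‖ →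
      (c * ((2 + ‖x‖) * ‖x‖ / (1 + ‖x‖) ^ 2) / ‖x‖) * ⟪x, b x⟫
          + c ^ 2 * ((2 + ‖x‖) * ‖x‖ / (1 + ‖x‖) ^ 2) ^ 2 / (2 * ‖x‖ ^ 2) * ⟪x, a x x⟫
        ≤ -(c / 2) * ((2 + ‖x‖) * ‖x‖ / (1 + ‖x‖) ^ 2) * |⟪x, b x⟫| / ‖x‖
      ∧ (c * ((2 + ‖x‖) * ‖x‖ / (1 + ‖x‖) ^ 2) / ‖x‖) * ⟪x, b x⟫
          + c ^ 2 * ((2 + ‖x‖) * ‖x‖ / (1 + ‖x‖) ^ 2) ^ 2 / (2 * ‖x‖ ^ 2) * ⟪x, a x x⟫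
        ≤ 0 :=
  lyapunov_drift_negativity_general b a hH2 K L hK hH3 c hc hcK
end

section
/- Convergence of the regularized rate integrals (step 1) of Section 6.2): Let T > 0, let v : [0,T] → ℝ^d and A : [0,T] → (d×d real matrices) be measurable maps such that A(s) is symmetric positive semidefinite for every s, let A⁺ : [0,T] → (d×d real matrices) be a measurable map such that A⁺(s) is the Moore–Penrose pseudoinverse of A(s) for every s, and assume A(s) A⁺(s) v(s) = v(s) for Lebesgue-a.e. s ∈ [0,T]. Then, as β → 0 from the right, ∫₀ᵀ ⟨v(s), (A(s) + βI)⁻¹ v(s)⟩ ds converges (in [0,∞], i.e. as an extended-nonnegative-real-valued Lebesgue integral) to ∫₀ᵀ ⟨v(s), A⁺(s) v(s)⟩ ds. -/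
/-!
For positive semidefinite `A`, `β > 0` and `v = A w`, put `u = (A + βI)⁻¹ v`. Then
`A (w - u) = β u`, hence `⟨v, w⟩ - ⟨v, u⟩ = β ⟨w, u⟩`, and positivity of `A` gives
`⟨w - u, u⟩ ≥ 0`, so `0 ≤ ⟨w, u⟩ ≤ ⟨w, w⟩`. Thus
`⟨v, w⟩ - β ⟨w, w⟩ ≤ ⟨v, (A + βI)⁻¹ v⟩ ≤ ⟨v, w⟩`: with `w = A⁺ v` the integrands converge a.e.
to `⟨v, A⁺ v⟩` and stay below it, so Fatou's lemma yields convergence of the integrals in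
`[0, ∞]`, whether or not the limit is finite.
-/

open Matrix MeasureTheory Filter
open scoped Topology ENNReal

theorem tendsto_lintegral_of_tendsto_of_eventually_le {α ι : Type*} [MeasurableSpace α]
    {μ : Measure α} {l : Filter ι} [l.IsCountablyGenerated] {F : ι → α → ℝ≥0∞}
    {f : α → ℝ≥0∞} (hF : ∀ i, AEMeasurable (F i) μ)
    (h_le : ∀ᶠ i in l, ∀ᵐ a ∂μ, F i a ≤ f a)
    (h_lim : ∀ᵐ a ∂μ, Tendsto (fun i => F i a) l (𝓝 (f a))) :
    Tendsto (fun i => ∫⁻ a, F i a ∂μ) l (𝓝 (∫⁻ a, f a ∂μ)) := by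
  rcases l.eq_or_neBot with rfl | _
  · exact tendsto_bot
  refine tendsto_of_le_liminf_of_limsup_le ?_ ?_
  · calc ∫⁻ a, f a ∂μ = ∫⁻ a, liminf (fun i => F i a) l ∂μ :=
          lintegral_congr_ae <| h_lim.mono fun _ h => h.liminf_eq.symm
      _ ≤ liminf (fun i => ∫⁻ a, F i a ∂μ) l := lintegral_liminf_le' hF
  · exact limsup_le_of_le (h := h_le.mono fun _ h => lintegral_mono_ae h)

theorem measurable_dotProduct_inv_mulVec {α n : Type*} [MeasurableSpace α] [Fintype n]
    [DecidableEq n] {M : α → Matrix n n ℝ} {x : α → n → ℝ}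
    (hM : ∀ i j, Measurable fun a => M a i j) (hx : Measurable x) :
    Measurable fun a => x a ⬝ᵥ (M a)⁻¹ *ᵥ x a := by
  have hM' : Measurable fun a => of.symm (M a) :=
    measurable_pi_lambda _ fun i => measurable_pi_lambda _ fun j => hM i j
  have hdet : Continuous fun B : n → n → ℝ => (of B).det := Continuous.matrix_det continuous_id
  have hadj : Continuous fun p : (n → n → ℝ) × (n → ℝ) => p.2 ⬝ᵥ (of p.1).adjugate *ᵥ p.2 :=
    continuous_snd.dotProduct
      ((Continuous.matrix_adjugate continuous_fst).matrix_mulVec continuous_snd)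
  simp_rw [inv_def, smul_mulVec, dotProduct_smul, smul_eq_mul, Ring.inverse_eq_inv']
  exact (hdet.measurable.comp hM').inv.mul (hadj.measurable.comp (hM'.prodMk hx))

namespace Matrix

variable {n : Type*} [Fintype n] [DecidableEq n] {A : Matrix n n ℝ} {β : ℝ} {u v w : n → ℝ}

theorem mulVec_sub_eq_smul_of_add_smul_one_mulVec_eq (hu : (A + β • 1) *ᵥ u = v)
    (hw : A *ᵥ w = v) : A *ᵥ (w - u) = β • u := by
  rw [add_mulVec, smul_mulVec, one_mulVec] at hu
  rw [mulVec_sub, hw, ← hu, add_sub_cancel_left]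

theorem IsHermitian.dotProduct_sub_dotProduct_of_mulVec_eq (hA : A.IsHermitian)
    (hu : (A + β • 1) *ᵥ u = v) (hw : A *ᵥ w = v) :
    v ⬝ᵥ w - v ⬝ᵥ u = β * (w ⬝ᵥ u) := by
  rw [← dotProduct_sub, ← hw, ← vecMul_transpose, (isHermitian_iff_isSymm.mp hA).eq,
    ← dotProduct_mulVec, mulVec_sub_eq_smul_of_add_smul_one_mulVec_eq hu hw, dotProduct_smul,
    smul_eq_mul]

theorem PosSemidef.dotProduct_mem_Icc_of_mulVec_eq (hA : A.PosSemidef) (hβ : 0 < β)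
    (hu : (A + β • 1) *ᵥ u = v) (hw : A *ᵥ w = v) :
    v ⬝ᵥ u ∈ Set.Icc (v ⬝ᵥ w - β * (w ⬝ᵥ w)) (v ⬝ᵥ w) := by
  have hgap := hA.1.dotProduct_sub_dotProduct_of_mulVec_eq hu hw
  have heu : 0 ≤ (w - u) ⬝ᵥ u := by
    have h := hA.dotProduct_mulVec_nonneg (w - u)
    rw [star_trivial, mulVec_sub_eq_smul_of_add_smul_one_mulVec_eq hu hw, dotProduct_smul,
      smul_eq_mul] at h
    exact (mul_nonneg_iff_of_pos_left hβ).mp h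
  have hself (x : n → ℝ) : 0 ≤ x ⬝ᵥ x := by simpa using dotProduct_star_self_nonneg x
  have hwu : 0 ≤ w ⬝ᵥ u := by
    have h : w ⬝ᵥ u = (w - u) ⬝ᵥ u + u ⬝ᵥ u := by rw [sub_dotProduct]; ring
    linarith [hself u]
  have hww : w ⬝ᵥ u ≤ w ⬝ᵥ w := by
    have h : w ⬝ᵥ w = w ⬝ᵥ u + (w - u) ⬝ᵥ (w - u) + (w - u) ⬝ᵥ u := by
      simp only [sub_dotProduct, dotProduct_sub, dotProduct_comm u w]; ring
    linarith [hself (w - u)]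
  exact ⟨by linarith [mul_le_mul_of_nonneg_left hww hβ.le], by linarith [mul_nonneg hβ.le hwu]⟩

theorem PosSemidef.dotProduct_inv_add_smul_one_mulVec_mem_Icc (hA : A.PosSemidef) (hβ : 0 < β)
    (hw : A *ᵥ w = v) :
    v ⬝ᵥ (A + β • 1)⁻¹ *ᵥ v ∈ Set.Icc (v ⬝ᵥ w - β * (w ⬝ᵥ w)) (v ⬝ᵥ w) := by
  have hdet : IsUnit (A + β • 1).det :=
    (isUnit_iff_isUnit_det _).mp (PosDef.posSemidef_add hA (PosDef.one.smul hβ)).isUnit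
  refine hA.dotProduct_mem_Icc_of_mulVec_eq hβ ?_ hw
  rw [mulVec_mulVec, mul_nonsing_inv _ hdet, one_mulVec]

theorem PosSemidef.tendsto_dotProduct_inv_add_smul_one (hA : A.PosSemidef) (hw : A *ᵥ w = v) :
    Tendsto (fun β : ℝ => v ⬝ᵥ (A + β • 1)⁻¹ *ᵥ v) (𝓝[>] 0) (𝓝 (v ⬝ᵥ w)) := by
  have hbounds : ∀ᶠ β in 𝓝[>] 0,
      v ⬝ᵥ (A + β • 1)⁻¹ *ᵥ v ∈ Set.Icc (v ⬝ᵥ w - β * (w ⬝ᵥ w)) (v ⬝ᵥ w) := by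
    filter_upwards [self_mem_nhdsWithin] with β hβ
    exact hA.dotProduct_inv_add_smul_one_mulVec_mem_Icc hβ hw
  have hlower : Tendsto (fun β : ℝ => v ⬝ᵥ w - β * (w ⬝ᵥ w)) (𝓝[>] 0) (𝓝 (v ⬝ᵥ w)) :=
    ((by fun_prop : Continuous fun β : ℝ => v ⬝ᵥ w - β * (w ⬝ᵥ w)).tendsto' 0 _
      (by simp)).mono_left nhdsWithin_le_nhds
  exact tendsto_of_tendsto_of_tendsto_of_le_of_le' hlower tendsto_const_nhds
    (hbounds.mono fun _ h => h.1) (hbounds.mono fun _ h => h.2)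

end Matrix

theorem regularized_rate_integral_convergence_general {d : ℕ}
    (T : ℝ)
    (v : ℝ → (Fin d → ℝ)) (hv : Measurable v)
    (A : ℝ → Matrix (Fin d) (Fin d) ℝ) (hA : ∀ i j, Measurable fun s => A s i j)
    (Ap : ℝ → Matrix (Fin d) (Fin d) ℝ)
    (hpsd : ∀ s, (A s).PosSemidef)
    (hae : ∀ᵐ s ∂(volume.restrict (Set.Icc (0 : ℝ) T)),
      A s *ᵥ (Ap s *ᵥ v s) = v s) :
    Tendsto (fun β : ℝ =>
        ∫⁻ s in Set.Icc (0 : ℝ) T,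
          ENNReal.ofReal (v s ⬝ᵥ ((A s + β • (1 : Matrix (Fin d) (Fin d) ℝ))⁻¹ *ᵥ v s)))
      (nhdsWithin 0 (Set.Ioi 0))
      (nhds (∫⁻ s in Set.Icc (0 : ℝ) T, ENNReal.ofReal (v s ⬝ᵥ (Ap s *ᵥ v s)))) := by
  have hmeas (β : ℝ) : Measurable fun s =>
      ENNReal.ofReal (v s ⬝ᵥ ((A s + β • (1 : Matrix (Fin d) (Fin d) ℝ))⁻¹ *ᵥ v s)) :=
    ENNReal.measurable_ofReal.comp
      (measurable_dotProduct_inv_mulVec (fun i j => (hA i j).add measurable_const) hv)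
  refine tendsto_lintegral_of_tendsto_of_eventually_le (fun β => (hmeas β).aemeasurable) ?_ ?_
  · filter_upwards [self_mem_nhdsWithin] with β hβ
    filter_upwards [hae] with s hs
    exact ENNReal.ofReal_le_ofReal ((hpsd s).dotProduct_inv_add_smul_one_mulVec_mem_Icc hβ hs).2
  · filter_upwards [hae] with s hs
    exact (ENNReal.continuous_ofReal.tendsto _).comp
      ((hpsd s).tendsto_dotProduct_inv_add_smul_one hs)

/-- Convergence of the regularized rate integrals: if `A(s)` is symmetric positive
semidefinite with Moore–Penrose pseudoinverse `A⁺(s)` and `A(s)A⁺(s)v(s) = v(s)` for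
a.e. `s ∈ [0,T]`, then `∫₀ᵀ ⟨v(s), (A(s) + βI)⁻¹ v(s)⟩ ds → ∫₀ᵀ ⟨v(s), A⁺(s)v(s)⟩ ds`
in `[0,∞]` as `β → 0⁺`. -/
theorem regularized_rate_integral_convergence {d : ℕ} (hd : 1 ≤ d)
    (T : ℝ) (hT : 0 < T)
    (v : ℝ → (Fin d → ℝ)) (hv : Measurable v)
    (A : ℝ → Matrix (Fin d) (Fin d) ℝ) (hA : ∀ i j, Measurable fun s => A s i j)
    (Ap : ℝ → Matrix (Fin d) (Fin d) ℝ) (hAp : ∀ i j, Measurable fun s => Ap s i j)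
    (hpsd : ∀ s, (A s).PosSemidef)
    (h1 : ∀ s, A s * Ap s * A s = A s) (h2 : ∀ s, Ap s * A s * Ap s = Ap s)
    (h3 : ∀ s, (A s * Ap s)ᵀ = A s * Ap s) (h4 : ∀ s, (Ap s * A s)ᵀ = Ap s * A s)
    (hae : ∀ᵐ s ∂(volume.restrict (Set.Icc (0 : ℝ) T)),
      A s *ᵥ (Ap s *ᵥ v s) = v s) :
    Tendsto (fun β : ℝ =>
        ∫⁻ s in Set.Icc (0 : ℝ) T,
          ENNReal.ofReal (v s ⬝ᵥ ((A s + β • (1 : Matrix (Fin d) (Fin d) ℝ))⁻¹ *ᵥ v s)))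
      (nhdsWithin 0 (Set.Ioi 0))
      (nhds (∫⁻ s in Set.Icc (0 : ℝ) T, ENNReal.ofReal (v s ⬝ᵥ (Ap s *ᵥ v s)))) :=
  regularized_rate_integral_convergence_general T v hv A hA Ap hpsd hae
end
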